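/- Descent step of gradient descent for blind ptychography: let ε, α_T, β_T ≥ 0, and let (z^t, v^t)_{t≥0} be generated by z^{t+1} = z^t − μ_t ∇_z J(z^t, v^t), v^{t+1} = v^t − ν_t ∇_v J(z^t, v^t) from arbitrary z⁰, v⁰ ∈ ℂ^d, with nonnegative step sizes satisfying μ_t, ν_t ≤ min{ B(z^t,v^t)^{−1}, ((15/4)d)^{−1/3}·‖∇_z J(z^t,v^t)‖₂^{−2/3}, ((15/4)d)^{−1/3}·‖∇_v J(z^t,v^t)‖₂^{−2/3} } (with the convention that a term b/0 in the minimum is discarded). Then for all t ≥ 0, J(z^{t+1}, v^{t+1}) ≤ J(z^t, v^t) − μ_t·‖∇_z J(z^t,v^t)‖₂² − ν_t·‖∇_v J(z^t,v^t)‖₂². -/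

import Mathlib

open scoped BigOperators Classical
open Finset

noncomputable section

namespace Ptycho

/-- Entry of the discrete Fourier matrix: `F_{k,j} = exp(-2πi·k·j/d)`. -/
def Fent (d : ℕ) (k j : ZMod d) : ℂ :=
  Complex.exp (-(2 * (Real.pi : ℂ) * Complex.I * (k.val : ℂ) * (j.val : ℂ)) / (d : ℂ))

/-- `[F (z ∘ S_r v)]_k`, i.e. the bilinear form `z^T Q_{r,k} v`. -/
def Qform (d : ℕ) [NeZero d] (r k : ZMod d) (z v : ZMod d → ℂ) : ℂ :=
  ∑ j : ZMod d, z j * Fent d k j * v (j - r)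

/-- Noiseless ptychographic measurement `|[F (x ∘ S_r w)]_k|²`. -/
def meas (d : ℕ) [NeZero d] (r k : ZMod d) (x w : ZMod d → ℂ) : ℝ :=
  ‖Qform d r k x w‖ ^ 2

/-- Squared Euclidean norm `‖u‖₂²`. -/
def nsq (d : ℕ) [NeZero d] (u : ZMod d → ℂ) : ℝ :=
  ∑ j : ZMod d, ‖u j‖ ^ 2

/-- Single-shift amplitude-based loss
`L_{r,ε}(z,v) = Σ_k (√(|z^T Q_{r,k} v|² + ε) − √(y_{r,k} + ε))²`. -/
def lossR (d : ℕ) [NeZero d] (y : ZMod d → ZMod d → ℝ) (ε : ℝ) (r : ZMod d)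
    (z v : ZMod d → ℂ) : ℝ :=
  ∑ k : ZMod d,
    (Real.sqrt (‖Qform d r k z v‖ ^ 2 + ε) - Real.sqrt (y r k + ε)) ^ 2

/-- Amplitude-based loss `L_ε(z,v) = Σ_{r∈R} L_{r,ε}(z,v)`. -/
def loss (d : ℕ) [NeZero d] (R : Finset (ZMod d)) (y : ZMod d → ZMod d → ℝ) (ε : ℝ)
    (z v : ZMod d → ℂ) : ℝ :=
  ∑ r ∈ R, lossR d y ε r z v

/-- Coefficient `1 − √(y_{r,k}+ε)/√(|z^T Q_{r,k} v|²+ε)` appearing in the Wirtinger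
gradients. (Lean's convention `a/0 = 0` realizes the paper's convention, since the
coefficient is always multiplied by `z^T Q_{r,k} v`.) -/
def coef (ε yrk : ℝ) (c : ℂ) : ℝ :=
  1 - Real.sqrt (yrk + ε) / Real.sqrt (‖c‖ ^ 2 + ε)

/-- Wirtinger gradient `∇_z L_{r,ε}(z,v)`; note `(Q_{r,k} v)_j = F_{k,j}·v_{j−r}`. -/
def gradZr (d : ℕ) [NeZero d] (y : ZMod d → ZMod d → ℝ) (ε : ℝ) (r : ZMod d)
    (z v : ZMod d → ℂ) : ZMod d → ℂ := fun j =>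
  ∑ k : ZMod d, (coef ε (y r k) (Qform d r k z v) : ℂ) * Qform d r k z v *
    (starRingEnd ℂ) (Fent d k j * v (j - r))

/-- Wirtinger gradient `∇_v L_{r,ε}(z,v)`; note `(Q_{r,k}^T z)_j = F_{k,j+r}·z_{j+r}`. -/
def gradVr (d : ℕ) [NeZero d] (y : ZMod d → ZMod d → ℝ) (ε : ℝ) (r : ZMod d)
    (z v : ZMod d → ℂ) : ZMod d → ℂ := fun j =>
  ∑ k : ZMod d, (coef ε (y r k) (Qform d r k z v) : ℂ) * Qform d r k z v *
    (starRingEnd ℂ) (Fent d k (j + r) * z (j + r))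

/-- Regularized loss `J(z,v) = L_ε(z,v) + α_T‖z‖₂² + β_T‖v‖₂²`. -/
def Jfun (d : ℕ) [NeZero d] (R : Finset (ZMod d)) (y : ZMod d → ZMod d → ℝ)
    (ε αT βT : ℝ) (z v : ZMod d → ℂ) : ℝ :=
  loss d R y ε z v + αT * nsq d z + βT * nsq d v

/-- Wirtinger gradient `∇_z J(z,v) = ∇_z L_ε(z,v) + α_T z`. -/
def gradZJ (d : ℕ) [NeZero d] (R : Finset (ZMod d)) (y : ZMod d → ZMod d → ℝ)
    (ε αT : ℝ) (z v : ZMod d → ℂ) : ZMod d → ℂ := fun j =>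
  (∑ r ∈ R, gradZr d y ε r z v j) + (αT : ℂ) * z j

/-- Wirtinger gradient `∇_v J(z,v) = ∇_v L_ε(z,v) + β_T v`. -/
def gradVJ (d : ℕ) [NeZero d] (R : Finset (ZMod d)) (y : ZMod d → ZMod d → ℝ)
    (ε βT : ℝ) (z v : ZMod d → ℂ) : ZMod d → ℂ := fun j =>
  (∑ r ∈ R, gradVr d y ε r z v j) + (βT : ℂ) * v j

/-- `‖y/d‖₁ = (1/d)·Σ_{r∈R} Σ_k y_{r,k}`. -/
def yd1 (d : ℕ) [NeZero d] (R : Finset (ZMod d)) (y : ZMod d → ZMod d → ℝ) : ℝ :=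
  (∑ r ∈ R, ∑ k : ZMod d, y r k) / d

/-- Real part of the Hermitian inner product `Re(u* g)`. -/
def reInner (d : ℕ) [NeZero d] (u g : ZMod d → ℂ) : ℝ :=
  (∑ j : ZMod d, (starRingEnd ℂ) (u j) * g j).re

/-- `B(z,v) = 3d·((10/3)‖z‖₂² + (10/3)‖v‖₂² + ‖y/d‖₁^{1/2}) + 3·max{α_T, β_T}`. -/
def Bfun (d : ℕ) [NeZero d] (R : Finset (ZMod d)) (y : ZMod d → ZMod d → ℝ)
    (αT βT : ℝ) (z v : ZMod d → ℂ) : ℝ :=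
  3 * d * ((10 / 3) * nsq d z + (10 / 3) * nsq d v + Real.sqrt (yd1 d R y)) +
    3 * max αT βT

/-!
Each amplitude term `c ↦ (√(|c|² + ε) − √(y + ε))²` is majorized by its first-order expansion
at `c` plus `|c' − c|²`, because `Re(c̄ c') + ε ≤ √(|c|² + ε) √(|c'|² + ε)`. For the updated
iterates, `c' − c = −μ Q(g, v) − ν Q(z, h) + μν Q(g, h)` with `g = ∇_z J`, `h = ∇_v J`; the
first two terms pair with the Wirtinger gradients and, together with the regularizers, produce
`−2μ‖g‖² − 2ν‖h‖²`. The mixed term and `|c' − c|²` are controlled by Parseval,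
`Σ_{r,k} |Q_{r,k}(u, w)|² ≤ d ‖u‖² ‖w‖²`, and Cauchy–Schwarz; the step-size bounds `μB ≤ 1` and
`μ³‖g‖² ≤ (15d/4)⁻¹` (and the same for `ν`, `h`) make these errors at most `μ‖g‖² + ν‖h‖²`.
-/

theorem re_conj_mul_add_le_sqrt_mul_sqrt {ε : ℝ} (hε : 0 ≤ ε) (c c' : ℂ) :
    ((starRingEnd ℂ) c * c').re + ε ≤ √(‖c‖ ^ 2 + ε) * √(‖c'‖ ^ 2 + ε) := by
  have hre : ((starRingEnd ℂ) c * c').re ≤ ‖c‖ * ‖c'‖ :=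
    (Complex.re_le_norm _).trans_eq (by rw [norm_mul, Complex.norm_conj])
  have hsq : (‖c‖ * ‖c'‖ + ε) ^ 2 ≤ (‖c‖ ^ 2 + ε) * (‖c'‖ ^ 2 + ε) := by
    nlinarith [sq_nonneg (‖c‖ - ‖c'‖)]
  rw [← Real.sqrt_mul (by positivity)]
  linarith [Real.le_sqrt_of_sq_le hsq]

theorem sq_amplitude_sub_le {ε : ℝ} (hε : 0 ≤ ε) (y : ℝ) (c c' : ℂ) :
    (√(‖c'‖ ^ 2 + ε) - √(y + ε)) ^ 2 ≤ (√(‖c‖ ^ 2 + ε) - √(y + ε)) ^ 2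
      + 2 * coef ε y c * ((starRingEnd ℂ) c * (c' - c)).re + ‖c' - c‖ ^ 2 := by
  set a := √(‖c‖ ^ 2 + ε)
  set a' := √(‖c'‖ ^ 2 + ε)
  set s := √(y + ε)
  have ha : a ^ 2 = ‖c‖ ^ 2 + ε := Real.sq_sqrt (by positivity)
  have ha' : a' ^ 2 = ‖c'‖ ^ 2 + ε := Real.sq_sqrt (by positivity)
  have hs : 0 ≤ s := Real.sqrt_nonneg _
  have hexp : ‖c'‖ ^ 2 = ‖c‖ ^ 2 + 2 * ((starRingEnd ℂ) c * (c' - c)).re + ‖c' - c‖ ^ 2 := by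
    simp only [Complex.sq_norm, Complex.normSq_apply, Complex.mul_re, Complex.conj_re,
      Complex.conj_im, Complex.sub_re, Complex.sub_im]
    ring
  have hre : ((starRingEnd ℂ) c * (c' - c)).re = ((starRingEnd ℂ) c * c').re - ‖c‖ ^ 2 := by
    simp only [Complex.sq_norm, Complex.normSq_apply, Complex.mul_re, Complex.conj_re,
      Complex.conj_im, Complex.sub_re, Complex.sub_im]
    ring
  have hcs := re_conj_mul_add_le_sqrt_mul_sqrt hε c c'
  rcases (Real.sqrt_nonneg (‖c‖ ^ 2 + ε)).eq_or_lt with ha0 | ha0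
  · -- `coef` is `1` here, because `s / 0 = 0`.
    have hcoef : coef ε y c = 1 := by simp [coef, ← ha0]
    rw [hcoef]
    nlinarith [mul_nonneg hs (Real.sqrt_nonneg (‖c'‖ ^ 2 + ε))]
  · have hcoef : coef ε y c * a = a - s := by
      rw [show coef ε y c = 1 - s / a from rfl, sub_mul, one_mul, div_mul_cancel₀ _ ha0.ne']
    nlinarith [mul_nonneg (div_nonneg hs ha0.le) (sub_nonneg.2 hcs)]

theorem abs_coef_mul_norm_le {ε y : ℝ} (hε : 0 ≤ ε) (hy : 0 ≤ y) (c : ℂ) :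
    |coef ε y c| * ‖c‖ ≤ ‖c‖ + √y := by
  set a := √(‖c‖ ^ 2 + ε)
  set s := √(y + ε)
  have hs : 0 ≤ s := Real.sqrt_nonneg _
  have hsy : 0 ≤ √y := Real.sqrt_nonneg _
  rcases (Real.sqrt_nonneg (‖c‖ ^ 2 + ε)).eq_or_lt with ha0 | ha0
  · simp [coef, ← ha0]
  have key : s * ‖c‖ ≤ a * (‖c‖ + √y) := by
    rw [← pow_le_pow_iff_left₀ (by positivity) (by positivity) two_ne_zero, mul_pow, mul_pow,
      Real.sq_sqrt (by positivity), Real.sq_sqrt (by positivity)]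
    nlinarith [Real.sq_sqrt hy, mul_nonneg (norm_nonneg c) hsy, mul_nonneg hε (norm_nonneg c)]
  have hdiv : s / a * ‖c‖ ≤ ‖c‖ + √y := by
    rw [div_mul_eq_mul_div, div_le_iff₀ ha0]; linarith
  rw [show coef ε y c = 1 - s / a from rfl]
  rcases le_total (s / a) 1 with h | h
  · have hsa : 0 ≤ s / a := div_nonneg hs ha0.le
    have h1 : |1 - s / a| ≤ 1 := abs_le.2 ⟨by linarith, by linarith⟩
    nlinarith [norm_nonneg c]
  · rw [abs_of_nonpos (by linarith)]; nlinarith [norm_nonneg c]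

theorem re_coef_mul_conj (a : ℝ) (c P : ℂ) :
    ((a : ℂ) * c * (starRingEnd ℂ) P).re = a * ((starRingEnd ℂ) c * P).re := by
  simp only [Complex.mul_re, Complex.ofReal_re, Complex.ofReal_im, Complex.conj_re,
    Complex.conj_im, Complex.mul_im]
  ring

theorem norm_add_add_sq_le {E : Type*} [SeminormedAddCommGroup E] (a b c : E) :
    ‖a + b + c‖ ^ 2 ≤ 3 * (‖a‖ ^ 2 + ‖b‖ ^ 2 + ‖c‖ ^ 2) := by
  have h := norm_add₃_le (a := a) (b := b) (c := c)
  nlinarith [norm_nonneg (a + b + c), sq_nonneg (‖a‖ - ‖b‖), sq_nonneg (‖b‖ - ‖c‖),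
    sq_nonneg (‖a‖ - ‖c‖)]

theorem sum_sum_mul_le_sqrt_mul_sqrt {ι κ : Type*} (s : Finset ι) (t : Finset κ)
    (f g : ι → κ → ℝ) :
    ∑ i ∈ s, ∑ k ∈ t, f i k * g i k
      ≤ √(∑ i ∈ s, ∑ k ∈ t, f i k ^ 2) * √(∑ i ∈ s, ∑ k ∈ t, g i k ^ 2) := by
  simpa only [Finset.sum_product] using
    Real.sum_mul_le_sqrt_mul_sqrt (s ×ˢ t) (fun p => f p.1 p.2) (fun p => g p.1 p.2)

theorem sq_mul_sq_mul_mul_le {μ ν γ η c : ℝ} (hμ : 0 ≤ μ) (hν : 0 ≤ ν) (hγ : 0 ≤ γ)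
    (hη : 0 ≤ η) (hμγ : μ ^ 3 * γ ≤ c) (hνη : ν ^ 3 * η ≤ c) :
    μ ^ 2 * ν ^ 2 * (γ * η) ≤ c * (μ * γ + ν * η) / 2 := by
  have amgm : μ ^ 2 * ν ^ 2 * (γ * η) ≤ (μ ^ 3 * γ * (ν * η) + ν ^ 3 * η * (μ * γ)) / 2 := by
    nlinarith [mul_nonneg (mul_nonneg (mul_nonneg hμ hν) (mul_nonneg hγ hη)) (sq_nonneg (μ - ν))]
  nlinarith [mul_le_mul_of_nonneg_right hμγ (mul_nonneg hν hη),
    mul_le_mul_of_nonneg_right hνη (mul_nonneg hμ hγ)]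

theorem step_error_le {d Z V Y γ η μ ν αT βT : ℝ} (hd : 0 < d) (hZ : 0 ≤ Z) (hV : 0 ≤ V)
    (hY : 0 ≤ Y) (hγ : 0 ≤ γ) (hη : 0 ≤ η) (hμ : 0 ≤ μ) (hν : 0 ≤ ν) (hmax : 0 ≤ max αT βT)
    (hμB : μ * (3 * d * ((10 / 3) * Z + (10 / 3) * V + Y) + 3 * max αT βT) ≤ 1)
    (hνB : ν * (3 * d * ((10 / 3) * Z + (10 / 3) * V + Y) + 3 * max αT βT) ≤ 1)
    (hμγ : μ ^ 3 * γ ≤ ((15 / 4) * d)⁻¹) (hνη : ν ^ 3 * η ≤ ((15 / 4) * d)⁻¹) :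
    2 * (μ * ν) * (d * (√(Z * V) + Y) * √(γ * η))
      + 3 * (μ ^ 2 * (d * (γ * V)) + ν ^ 2 * (d * (Z * η)) + μ ^ 2 * ν ^ 2 * (d * (γ * η)))
      + αT * (μ ^ 2 * γ) + βT * (ν ^ 2 * η) ≤ μ * γ + ν * η := by
  have hZV : √(Z * V) ≤ (Z + V) / 2 := by
    rw [Real.sqrt_mul hZ]
    nlinarith [Real.sq_sqrt hZ, Real.sq_sqrt hV, sq_nonneg (√Z - √V)]
  have hγη : 2 * (μ * ν) * √(γ * η) ≤ μ ^ 2 * γ + ν ^ 2 * η := by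
    rw [Real.sqrt_mul hγ]
    nlinarith [Real.sq_sqrt hγ, Real.sq_sqrt hη, sq_nonneg (μ * √γ - ν * √η)]
  have hcross : 2 * (μ * ν) * (d * (√(Z * V) + Y) * √(γ * η))
      ≤ d * ((Z + V) / 2 + Y) * (μ ^ 2 * γ + ν ^ 2 * η) := by
    calc _ = d * (√(Z * V) + Y) * (2 * (μ * ν) * √(γ * η)) := by ring
      _ ≤ _ := by gcongr
  have hquartic : 3 * (μ ^ 2 * ν ^ 2 * (d * (γ * η))) ≤ (2 / 5) * (μ * γ + ν * η) := by
    calc _ = 3 * d * (μ ^ 2 * ν ^ 2 * (γ * η)) := by ring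
      _ ≤ 3 * d * (((15 / 4) * d)⁻¹ * (μ * γ + ν * η) / 2) := by
        gcongr; exact sq_mul_sq_mul_mul_le hμ hν hγ hη hμγ hνη
      _ = (2 / 5) * (μ * γ + ν * η) := by field_simp; ring
  have hμpart : μ * (d * ((Z + V) / 2 + Y) + 3 * (d * V) + αT) ≤ 7 / 20 := by
    nlinarith [le_max_left αT βT, mul_nonneg hd.le hZ, mul_nonneg hd.le hV, mul_nonneg hd.le hY]
  have hνpart : ν * (d * ((Z + V) / 2 + Y) + 3 * (d * Z) + βT) ≤ 7 / 20 := by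
    nlinarith [le_max_right αT βT, mul_nonneg hd.le hZ, mul_nonneg hd.le hV, mul_nonneg hd.le hY]
  nlinarith [mul_le_mul_of_nonneg_left hμpart (mul_nonneg hμ hγ),
    mul_le_mul_of_nonneg_left hνpart (mul_nonneg hν hη), mul_nonneg hμ hγ, mul_nonneg hν hη]

theorem mul_le_one_of_le_inv_of_ne_zero {μ B : ℝ} (hB : 0 ≤ B) (h : B ≠ 0 → μ ≤ B⁻¹) :
    μ * B ≤ 1 := by
  rcases hB.eq_or_lt with rfl | hB
  · simp
  exact (le_div_iff₀ hB).1 (by rw [one_div]; exact h hB.ne')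

theorem pow_three_mul_le_inv_of_le_rpow {D μ γ : ℝ} (hD : 0 < D) (hμ : 0 ≤ μ) (hγ : 0 ≤ γ)
    (h : √γ ≠ 0 → μ ≤ D ^ (-(1 / 3) : ℝ) * √γ ^ (-(2 / 3) : ℝ)) : μ ^ 3 * γ ≤ D⁻¹ := by
  rcases hγ.eq_or_lt with rfl | hγ
  · simpa using hD.le
  have hsγ : 0 < √γ := Real.sqrt_pos.2 hγ
  have hcube : (D ^ (-(1 / 3) : ℝ) * √γ ^ (-(2 / 3) : ℝ)) ^ 3 = D⁻¹ * γ⁻¹ := by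
    rw [mul_pow, ← Real.rpow_mul_natCast hD.le, ← Real.rpow_mul_natCast hsγ.le]
    norm_num [Real.rpow_neg_one, Real.rpow_neg hsγ.le, Real.sq_sqrt hγ.le]
  calc μ ^ 3 * γ ≤ (D⁻¹ * γ⁻¹) * γ := by
        rw [← hcube]; gcongr; exact h hsγ.ne'
    _ = D⁻¹ := by field_simp

-- Half the derivative of `L_ε` at `(z, v)` along a perturbation `P` of the measurements `Q(z, v)`.
def coefPairing (d : ℕ) [NeZero d] (R : Finset (ZMod d)) (y : ZMod d → ZMod d → ℝ) (ε : ℝ)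
    (z v : ZMod d → ℂ) (P : ZMod d → ZMod d → ℂ) : ℝ :=
  ∑ r ∈ R, ∑ k : ZMod d,
    coef ε (y r k) (Qform d r k z v) * ((starRingEnd ℂ) (Qform d r k z v) * P r k).re

section Ptychography

variable {d : ℕ} [NeZero d] (R : Finset (ZMod d)) (y : ZMod d → ZMod d → ℝ) (ε : ℝ)
  (z v : ZMod d → ℂ)

theorem Fent_eq_stdAddChar (k j : ZMod d) :
    Fent d k j = ZMod.stdAddChar (-(k * j)) := by
  have h : -(k * j) = ((-((k.val * j.val : ℕ) : ℤ) : ℤ) : ZMod d) := by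
    push_cast; simp
  rw [h, ZMod.stdAddChar_coe, Fent]
  push_cast
  ring_nf

theorem sum_Fent_mul_conj_Fent (j j' : ZMod d) :
    ∑ k : ZMod d, Fent d k j * (starRingEnd ℂ) (Fent d k j') = if j = j' then (d : ℂ) else 0 := by
  have h : ∀ k, Fent d k j * (starRingEnd ℂ) (Fent d k j') = ZMod.stdAddChar (k * (j' - j)) := by
    intro k
    rw [Fent_eq_stdAddChar, Fent_eq_stdAddChar, ← AddChar.map_neg_eq_conj, ← AddChar.map_add_eq_mul]
    ring_nf
  simp only [h, AddChar.sum_mulShift _ (ZMod.isPrimitive_stdAddChar d), ZMod.card, sub_eq_zero,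
    eq_comm (a := j'), Nat.cast_ite, Nat.cast_zero]

theorem sum_norm_sq_dft (x : ZMod d → ℂ) :
    ∑ k : ZMod d, ‖∑ j : ZMod d, x j * Fent d k j‖ ^ 2 = d * nsq d x := by
  have h : ∀ S : ℂ, ((‖S‖ ^ 2 : ℝ) : ℂ) = S * (starRingEnd ℂ) S := fun S => by
    rw [Complex.mul_conj, Complex.normSq_eq_norm_sq]
  apply Complex.ofReal_injective
  calc ((∑ k : ZMod d, ‖∑ j : ZMod d, x j * Fent d k j‖ ^ 2 : ℝ) : ℂ)
      = ∑ j : ZMod d, ∑ j' : ZMod d, x j * (starRingEnd ℂ) (x j') *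
          ∑ k : ZMod d, Fent d k j * (starRingEnd ℂ) (Fent d k j') := by
        simp only [Complex.ofReal_sum, h, map_sum, Finset.sum_mul_sum]
        rw [Finset.sum_comm]
        refine Finset.sum_congr rfl fun j _ => ?_
        rw [Finset.sum_comm]
        simp only [Finset.mul_sum, map_mul]
        exact Finset.sum_congr rfl fun _ _ => Finset.sum_congr rfl fun _ _ => by ring
    _ = ((d * nsq d x : ℝ) : ℂ) := by
        simp [sum_Fent_mul_conj_Fent, nsq, h, Finset.mul_sum, mul_comm]

theorem sum_norm_sq_Qform (r : ZMod d) (u w : ZMod d → ℂ) :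
    ∑ k : ZMod d, ‖Qform d r k u w‖ ^ 2 = d * ∑ j : ZMod d, ‖u j‖ ^ 2 * ‖w (j - r)‖ ^ 2 := by
  have h := sum_norm_sq_dft (fun j => u j * w (j - r))
  simp only [nsq, norm_mul, mul_pow] at h
  rw [← h]
  exact Finset.sum_congr rfl fun k _ => by
    rw [Qform]; congr 2; exact Finset.sum_congr rfl fun j _ => by ring

theorem sum_sum_norm_sq_Qform_le (u w : ZMod d → ℂ) :
    ∑ r ∈ R, ∑ k : ZMod d, ‖Qform d r k u w‖ ^ 2 ≤ d * (nsq d u * nsq d w) := by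
  calc ∑ r ∈ R, ∑ k : ZMod d, ‖Qform d r k u w‖ ^ 2
      ≤ ∑ r : ZMod d, ∑ k : ZMod d, ‖Qform d r k u w‖ ^ 2 :=
        Finset.sum_le_sum_of_subset_of_nonneg (Finset.subset_univ R)
          fun _ _ _ => Finset.sum_nonneg fun _ _ => sq_nonneg _
    _ = d * (nsq d u * nsq d w) := by
        simp only [sum_norm_sq_Qform, ← Finset.mul_sum]
        rw [Finset.sum_comm, nsq, nsq, Finset.sum_mul]
        congr 1
        refine Finset.sum_congr rfl fun j _ => ?_
        rw [← Finset.mul_sum]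
        congr 1
        exact Fintype.sum_equiv (Equiv.subLeft j) _ _ fun _ => rfl

theorem nsq_nonneg (u : ZMod d → ℂ) : 0 ≤ nsq d u :=
  Finset.sum_nonneg fun _ _ => sq_nonneg _

theorem reInner_self (u : ZMod d → ℂ) : reInner d u u = nsq d u := by
  simp only [reInner, nsq, Complex.re_sum]
  exact Finset.sum_congr rfl fun j _ => by
    rw [mul_comm, Complex.mul_conj, Complex.ofReal_re, Complex.normSq_eq_norm_sq]

theorem nsq_sub_smul (a b : ZMod d → ℂ) (μ : ℝ) :
    nsq d (fun j => a j - μ * b j) = nsq d a - 2 * μ * reInner d b a + μ ^ 2 * nsq d b := by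
  simp only [nsq, reInner, Complex.re_sum, Finset.mul_sum, ← Finset.sum_sub_distrib,
    ← Finset.sum_add_distrib]
  refine Finset.sum_congr rfl fun j _ => ?_
  simp only [Complex.sq_norm, Complex.normSq_apply, Complex.mul_re, Complex.sub_re,
    Complex.sub_im, Complex.mul_im, Complex.conj_re, Complex.conj_im, Complex.ofReal_re,
    Complex.ofReal_im]
  ring

theorem Qform_sub_smul (r k : ZMod d) (g h : ZMod d → ℂ) (μ ν : ℝ) :
    Qform d r k (fun j => z j - μ * g j) (fun j => v j - ν * h j)
      = Qform d r k z v - μ * Qform d r k g v - ν * Qform d r k z h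
        + μ * ν * Qform d r k g h := by
  simp only [Qform, Finset.mul_sum, ← Finset.sum_sub_distrib, ← Finset.sum_add_distrib]
  exact Finset.sum_congr rfl fun j _ => by ring

theorem Bfun_nonneg {αT βT : ℝ} (hmax : 0 ≤ max αT βT) : 0 ≤ Bfun d R y αT βT z v := by
  have := nsq_nonneg z
  have := nsq_nonneg v
  unfold Bfun
  positivity

theorem sum_conj_mul_gradZr (r : ZMod d) (u : ZMod d → ℂ) :
    ∑ j : ZMod d, (starRingEnd ℂ) (u j) * gradZr d y ε r z v j
      = ∑ k : ZMod d, (coef ε (y r k) (Qform d r k z v) : ℂ) * Qform d r k z v *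
          (starRingEnd ℂ) (Qform d r k u v) := by
  simp only [gradZr, Qform, Finset.mul_sum, map_sum]
  rw [Finset.sum_comm]
  refine Finset.sum_congr rfl fun k _ => Finset.sum_congr rfl fun j _ => ?_
  simp only [map_mul]
  ring

theorem sum_conj_mul_gradVr (r : ZMod d) (w : ZMod d → ℂ) :
    ∑ j : ZMod d, (starRingEnd ℂ) (w j) * gradVr d y ε r z v j
      = ∑ k : ZMod d, (coef ε (y r k) (Qform d r k z v) : ℂ) * Qform d r k z v *
          (starRingEnd ℂ) (Qform d r k z w) := by
  have hshift : ∀ k, Qform d r k z w = ∑ j : ZMod d, z (j + r) * Fent d k (j + r) * w j :=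
    fun k => Fintype.sum_equiv (Equiv.subRight r) _ _ fun i => by simp
  simp only [gradVr, hshift, Finset.mul_sum, map_sum]
  rw [Finset.sum_comm]
  refine Finset.sum_congr rfl fun k _ => Finset.sum_congr rfl fun j _ => ?_
  simp only [map_mul]
  ring

theorem reInner_gradZJ (αT : ℝ) (u : ZMod d → ℂ) :
    reInner d u (gradZJ d R y ε αT z v)
      = coefPairing d R y ε z v (fun r k => Qform d r k u v) + αT * reInner d u z := by
  simp only [reInner, gradZJ, mul_add, Finset.sum_add_distrib, Complex.add_re, Finset.mul_sum]
  rw [Finset.sum_comm]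
  simp only [sum_conj_mul_gradZr, Complex.re_sum, re_coef_mul_conj, coefPairing,
    mul_left_comm _ (αT : ℂ), Complex.re_ofReal_mul, Finset.mul_sum]

theorem reInner_gradVJ (βT : ℝ) (w : ZMod d → ℂ) :
    reInner d w (gradVJ d R y ε βT z v)
      = coefPairing d R y ε z v (fun r k => Qform d r k z w) + βT * reInner d w v := by
  simp only [reInner, gradVJ, mul_add, Finset.sum_add_distrib, Complex.add_re, Finset.mul_sum]
  rw [Finset.sum_comm]
  simp only [sum_conj_mul_gradVr, Complex.re_sum, re_coef_mul_conj, coefPairing,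
    mul_left_comm _ (βT : ℂ), Complex.re_ofReal_mul, Finset.mul_sum]

theorem loss_le_coefPairing_add (hε : 0 ≤ ε) (z' v' : ZMod d → ℂ) :
    loss d R y ε z' v' ≤ loss d R y ε z v
      + 2 * coefPairing d R y ε z v (fun r k => Qform d r k z' v' - Qform d r k z v)
      + ∑ r ∈ R, ∑ k : ZMod d, ‖Qform d r k z' v' - Qform d r k z v‖ ^ 2 := by
  simp only [loss, lossR, coefPairing, Finset.mul_sum, ← Finset.sum_add_distrib]
  exact Finset.sum_le_sum fun r _ => Finset.sum_le_sum fun k _ => by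
    linarith [sq_amplitude_sub_le hε (y r k) (Qform d r k z v) (Qform d r k z' v')]

theorem coefPairing_Qform_sub_smul (g h : ZMod d → ℂ) (μ ν : ℝ) :
    coefPairing d R y ε z v (fun r k =>
        Qform d r k (fun j => z j - μ * g j) (fun j => v j - ν * h j) - Qform d r k z v)
      = -μ * coefPairing d R y ε z v (fun r k => Qform d r k g v)
        - ν * coefPairing d R y ε z v (fun r k => Qform d r k z h)
        + μ * ν * coefPairing d R y ε z v (fun r k => Qform d r k g h) := by
  simp only [coefPairing, Qform_sub_smul, Finset.mul_sum, ← Finset.sum_sub_distrib,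
    ← Finset.sum_add_distrib]
  refine Finset.sum_congr rfl fun r _ => Finset.sum_congr rfl fun k _ => ?_
  simp only [Complex.mul_re, Complex.sub_re, Complex.sub_im, Complex.add_re, Complex.add_im,
    Complex.mul_im, Complex.conj_re, Complex.conj_im, Complex.ofReal_re, Complex.ofReal_im]
  ring

theorem Jfun_sub_smul_le (αT βT : ℝ) (hε : 0 ≤ ε) (g h : ZMod d → ℂ) (μ ν : ℝ) :
    Jfun d R y ε αT βT (fun j => z j - μ * g j) (fun j => v j - ν * h j)
      ≤ Jfun d R y ε αT βT z v - 2 * μ * reInner d g (gradZJ d R y ε αT z v)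
        - 2 * ν * reInner d h (gradVJ d R y ε βT z v)
        + 2 * (μ * ν) * coefPairing d R y ε z v (fun r k => Qform d r k g h)
        + ∑ r ∈ R, ∑ k : ZMod d, ‖Qform d r k (fun j => z j - μ * g j)
            (fun j => v j - ν * h j) - Qform d r k z v‖ ^ 2
        + αT * (μ ^ 2 * nsq d g) + βT * (ν ^ 2 * nsq d h) := by
  have hloss := loss_le_coefPairing_add R y ε z v hε (fun j => z j - μ * g j)
    (fun j => v j - ν * h j)
  rw [coefPairing_Qform_sub_smul] at hloss
  rw [Jfun, Jfun, nsq_sub_smul, nsq_sub_smul, reInner_gradZJ, reInner_gradVJ]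
  linarith

theorem sum_sum_norm_sq_Qform_sub_smul_le (g h : ZMod d → ℂ) (μ ν : ℝ) :
    ∑ r ∈ R, ∑ k : ZMod d, ‖Qform d r k (fun j => z j - μ * g j)
        (fun j => v j - ν * h j) - Qform d r k z v‖ ^ 2
      ≤ 3 * (μ ^ 2 * (d * (nsq d g * nsq d v)) + ν ^ 2 * (d * (nsq d z * nsq d h))
        + μ ^ 2 * ν ^ 2 * (d * (nsq d g * nsq d h))) := by
  calc _ ≤ ∑ r ∈ R, ∑ k : ZMod d, 3 * (μ ^ 2 * ‖Qform d r k g v‖ ^ 2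
          + ν ^ 2 * ‖Qform d r k z h‖ ^ 2 + μ ^ 2 * ν ^ 2 * ‖Qform d r k g h‖ ^ 2) := by
        refine Finset.sum_le_sum fun r _ => Finset.sum_le_sum fun k _ => ?_
        have := norm_add_add_sq_le (-(μ * Qform d r k g v)) (-(ν * Qform d r k z h))
          (μ * ν * Qform d r k g h)
        simp only [norm_neg, norm_mul, Complex.norm_real, Real.norm_eq_abs, mul_pow, sq_abs]
          at this
        have hΔ : Qform d r k (fun j => z j - μ * g j) (fun j => v j - ν * h j) - Qform d r k z v
            = -(μ * Qform d r k g v) + -(ν * Qform d r k z h) + μ * ν * Qform d r k g h := by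
          rw [Qform_sub_smul]; ring
        rw [hΔ]; exact this
    _ = 3 * (μ ^ 2 * ∑ r ∈ R, ∑ k : ZMod d, ‖Qform d r k g v‖ ^ 2
          + ν ^ 2 * ∑ r ∈ R, ∑ k : ZMod d, ‖Qform d r k z h‖ ^ 2
          + μ ^ 2 * ν ^ 2 * ∑ r ∈ R, ∑ k : ZMod d, ‖Qform d r k g h‖ ^ 2) := by
        simp only [Finset.mul_sum, Finset.sum_add_distrib, mul_add]
    _ ≤ _ := by
        gcongr <;> exact sum_sum_norm_sq_Qform_le R _ _

theorem coefPairing_Qform_le (hε : 0 ≤ ε) (hy : ∀ r ∈ R, ∀ k : ZMod d, 0 ≤ y r k)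
    (u w : ZMod d → ℂ) :
    coefPairing d R y ε z v (fun r k => Qform d r k u w)
      ≤ d * (√(nsq d z * nsq d v) + √(yd1 d R y)) * √(nsq d u * nsq d w) := by
  have hd : (0 : ℝ) < d := Nat.cast_pos.2 (NeZero.pos d)
  have hW := sum_sum_norm_sq_Qform_le R u w
  have hy_sum : ∑ r ∈ R, ∑ k : ZMod d, √(y r k) ^ 2 = d * yd1 d R y := by
    rw [yd1, mul_div_cancel₀ _ hd.ne']
    exact Finset.sum_congr rfl fun r hr => Finset.sum_congr rfl fun k _ =>
      Real.sq_sqrt (hy r hr k)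
  calc _ ≤ ∑ r ∈ R, ∑ k : ZMod d, (‖Qform d r k z v‖ + √(y r k)) * ‖Qform d r k u w‖ := by
        refine Finset.sum_le_sum fun r hr => Finset.sum_le_sum fun k _ => ?_
        calc _ ≤ |coef ε (y r k) (Qform d r k z v)| * ‖Qform d r k z v‖ * ‖Qform d r k u w‖ := by
              rw [mul_assoc, ← Complex.norm_conj (Qform d r k z v), ← norm_mul]
              exact (le_abs_self _).trans (by rw [abs_mul]; gcongr; exact Complex.abs_re_le_norm _)
          _ ≤ _ := by
              gcongr; exact abs_coef_mul_norm_le hε (hy r hr k) _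
    _ = ∑ r ∈ R, ∑ k : ZMod d, ‖Qform d r k z v‖ * ‖Qform d r k u w‖
          + ∑ r ∈ R, ∑ k : ZMod d, √(y r k) * ‖Qform d r k u w‖ := by
        simp only [add_mul, Finset.sum_add_distrib]
    _ ≤ √(d * (nsq d z * nsq d v)) * √(d * (nsq d u * nsq d w))
          + √(d * yd1 d R y) * √(d * (nsq d u * nsq d w)) := by
        gcongr
        · exact (sum_sum_mul_le_sqrt_mul_sqrt _ _ _ _).trans (by
            gcongr; exact sum_sum_norm_sq_Qform_le R z v)
        · exact (sum_sum_mul_le_sqrt_mul_sqrt _ _ _ _).trans (by rw [hy_sum]; gcongr)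
    _ = _ := by
        simp only [Real.sqrt_mul hd.le]
        linear_combination (√(nsq d z * nsq d v) + √(yd1 d R y)) * √(nsq d u * nsq d w)
          * Real.mul_self_sqrt hd.le

theorem Jfun_gradient_step_le {αT βT : ℝ} (hε : 0 ≤ ε)
    (hy : ∀ r ∈ R, ∀ k : ZMod d, 0 ≤ y r k) (hmax : 0 ≤ max αT βT) {μ ν : ℝ} (hμ : 0 ≤ μ)
    (hν : 0 ≤ ν)
    (hμB : μ * Bfun d R y αT βT z v ≤ 1) (hνB : ν * Bfun d R y αT βT z v ≤ 1)
    (hμγ : μ ^ 3 * nsq d (gradZJ d R y ε αT z v) ≤ ((15 / 4) * (d : ℝ))⁻¹)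
    (hνη : ν ^ 3 * nsq d (gradVJ d R y ε βT z v) ≤ ((15 / 4) * (d : ℝ))⁻¹) :
    Jfun d R y ε αT βT (fun j => z j - μ * gradZJ d R y ε αT z v j)
        (fun j => v j - ν * gradVJ d R y ε βT z v j)
      ≤ Jfun d R y ε αT βT z v - μ * nsq d (gradZJ d R y ε αT z v)
        - ν * nsq d (gradVJ d R y ε βT z v) := by
  set g := gradZJ d R y ε αT z v
  set h := gradVJ d R y ε βT z v
  have hd : (0 : ℝ) < d := Nat.cast_pos.2 (NeZero.pos d)
  have hJ := Jfun_sub_smul_le R y ε z v αT βT hε g h μ ν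
  rw [reInner_self, reInner_self] at hJ
  have hW := mul_le_mul_of_nonneg_left (coefPairing_Qform_le R y ε z v hε hy g h)
    (by positivity : 0 ≤ 2 * (μ * ν))
  have hΔ := sum_sum_norm_sq_Qform_sub_smul_le R z v g h μ ν
  have hbudget := step_error_le hd (nsq_nonneg z) (nsq_nonneg v) (Real.sqrt_nonneg _)
    (nsq_nonneg g) (nsq_nonneg h) hμ hν hmax hμB hνB hμγ hνη
  linarith

end Ptychography

theorem gradient_descent_step_general (d : ℕ) [NeZero d]
    (R : Finset (ZMod d))
    (y : ZMod d → ZMod d → ℝ) (hy : ∀ r ∈ R, ∀ k : ZMod d, 0 ≤ y r k)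
    (ε αT βT : ℝ) (hε : 0 ≤ ε) (hαT : 0 ≤ αT)
    (z v : ℕ → ZMod d → ℂ) (μ ν : ℕ → ℝ)
    (hμ0 : ∀ t, 0 ≤ μ t) (hν0 : ∀ t, 0 ≤ ν t)
    (hμB : ∀ t, Bfun d R y αT βT (z t) (v t) ≠ 0 →
      μ t ≤ (Bfun d R y αT βT (z t) (v t))⁻¹)
    (hνB : ∀ t, Bfun d R y αT βT (z t) (v t) ≠ 0 →
      ν t ≤ (Bfun d R y αT βT (z t) (v t))⁻¹)
    (hμz : ∀ t, Real.sqrt (nsq d (gradZJ d R y ε αT (z t) (v t))) ≠ 0 →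
      μ t ≤ ((15 / 4) * d : ℝ) ^ (-(1 / 3) : ℝ) *
        Real.sqrt (nsq d (gradZJ d R y ε αT (z t) (v t))) ^ (-(2 / 3) : ℝ))
    (hνv : ∀ t, Real.sqrt (nsq d (gradVJ d R y ε βT (z t) (v t))) ≠ 0 →
      ν t ≤ ((15 / 4) * d : ℝ) ^ (-(1 / 3) : ℝ) *
        Real.sqrt (nsq d (gradVJ d R y ε βT (z t) (v t))) ^ (-(2 / 3) : ℝ))
    (hzrec : ∀ t, z (t + 1) =
      fun j => z t j - (μ t : ℂ) * gradZJ d R y ε αT (z t) (v t) j)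
    (hvrec : ∀ t, v (t + 1) =
      fun j => v t j - (ν t : ℂ) * gradVJ d R y ε βT (z t) (v t) j) :
    ∀ t, Jfun d R y ε αT βT (z (t + 1)) (v (t + 1))
      ≤ Jfun d R y ε αT βT (z t) (v t)
        - μ t * nsq d (gradZJ d R y ε αT (z t) (v t))
        - ν t * nsq d (gradVJ d R y ε βT (z t) (v t)) := by
  intro t
  have hd : (0 : ℝ) < (15 / 4) * d := by
    have : (0 : ℝ) < d := Nat.cast_pos.2 (NeZero.pos d)
    positivity
  have hmax : 0 ≤ max αT βT := le_max_of_le_left hαT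
  have hB := Bfun_nonneg R y (z t) (v t) hmax
  rw [hzrec t, hvrec t]
  exact Jfun_gradient_step_le R y ε (z t) (v t) hε hy hmax (hμ0 t) (hν0 t)
    (mul_le_one_of_le_inv_of_ne_zero hB (hμB t)) (mul_le_one_of_le_inv_of_ne_zero hB (hνB t))
    (pow_three_mul_le_inv_of_le_rpow hd (hμ0 t) (nsq_nonneg _) (hμz t))
    (pow_three_mul_le_inv_of_le_rpow hd (hν0 t) (nsq_nonneg _) (hνv t))

/-- **Descent step of gradient descent for blind ptychography:** with step sizes
`μ_t, ν_t ≤ min{B(z^t,v^t)^{−1}, ((15/4)d)^{−1/3}‖∇_z J‖₂^{−2/3}, ((15/4)d)^{−1/3}‖∇_v J‖₂^{−2/3}}`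
(terms with division by zero discarded from the minimum, encoded below by guarding each
inequality with the nonvanishing of the corresponding base), the value of `J` decreases:
`J(z^{t+1},v^{t+1}) ≤ J(z^t,v^t) − μ_t‖∇_z J(z^t,v^t)‖₂² − ν_t‖∇_v J(z^t,v^t)‖₂²`. -/
theorem gradient_descent_step (d : ℕ) [NeZero d]
    (R : Finset (ZMod d)) (hR : R.Nonempty)
    (y : ZMod d → ZMod d → ℝ) (hy : ∀ r ∈ R, ∀ k : ZMod d, 0 ≤ y r k)
    (ε αT βT : ℝ) (hε : 0 ≤ ε) (hαT : 0 ≤ αT) (hβT : 0 ≤ βT)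
    (z v : ℕ → ZMod d → ℂ) (μ ν : ℕ → ℝ)
    (hμ0 : ∀ t, 0 ≤ μ t) (hν0 : ∀ t, 0 ≤ ν t)
    (hμB : ∀ t, Bfun d R y αT βT (z t) (v t) ≠ 0 →
      μ t ≤ (Bfun d R y αT βT (z t) (v t))⁻¹)
    (hνB : ∀ t, Bfun d R y αT βT (z t) (v t) ≠ 0 →
      ν t ≤ (Bfun d R y αT βT (z t) (v t))⁻¹)
    (hμz : ∀ t, Real.sqrt (nsq d (gradZJ d R y ε αT (z t) (v t))) ≠ 0 →
      μ t ≤ ((15 / 4) * d : ℝ) ^ (-(1 / 3) : ℝ) *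
        Real.sqrt (nsq d (gradZJ d R y ε αT (z t) (v t))) ^ (-(2 / 3) : ℝ))
    (hμv : ∀ t, Real.sqrt (nsq d (gradVJ d R y ε βT (z t) (v t))) ≠ 0 →
      μ t ≤ ((15 / 4) * d : ℝ) ^ (-(1 / 3) : ℝ) *
        Real.sqrt (nsq d (gradVJ d R y ε βT (z t) (v t))) ^ (-(2 / 3) : ℝ))
    (hνz : ∀ t, Real.sqrt (nsq d (gradZJ d R y ε αT (z t) (v t))) ≠ 0 →
      ν t ≤ ((15 / 4) * d : ℝ) ^ (-(1 / 3) : ℝ) *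
        Real.sqrt (nsq d (gradZJ d R y ε αT (z t) (v t))) ^ (-(2 / 3) : ℝ))
    (hνv : ∀ t, Real.sqrt (nsq d (gradVJ d R y ε βT (z t) (v t))) ≠ 0 →
      ν t ≤ ((15 / 4) * d : ℝ) ^ (-(1 / 3) : ℝ) *
        Real.sqrt (nsq d (gradVJ d R y ε βT (z t) (v t))) ^ (-(2 / 3) : ℝ))
    (hzrec : ∀ t, z (t + 1) =
      fun j => z t j - (μ t : ℂ) * gradZJ d R y ε αT (z t) (v t) j)
    (hvrec : ∀ t, v (t + 1) =
      fun j => v t j - (ν t : ℂ) * gradVJ d R y ε βT (z t) (v t) j) :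
    ∀ t, Jfun d R y ε αT βT (z (t + 1)) (v (t + 1))
      ≤ Jfun d R y ε αT βT (z t) (v t)
        - μ t * nsq d (gradZJ d R y ε αT (z t) (v t))
        - ν t * nsq d (gradVJ d R y ε βT (z t) (v t)) :=
  gradient_descent_step_general d R y hy ε αT βT hε hαT z v μ ν hμ0 hν0 hμB hνB hμz hνv hzrec hvrec

end Ptycho
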